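/- Let C be a field of characteristic p > 0 and x ∈ 1 + X·C⟦X⟧. If α ∈ ℤ_p is a rational integer k ∈ ℤ ⊆ ℤ_p, then the p-adic power x^α (defined via the digit expansion of α as an X-adic limit) coincides with the ordinary k-th power x^k in the group 1 + X·C⟦X⟧. -/

import Mathlib

/-!
Write `k = a + pⁿ c` with `a = α.appr n` the `n`-th digit partial sum of `α = k`. In
characteristic `p` the Frobenius gives `uᵖⁿ - 1 = (u - 1)ᵖⁿ`, which is divisible by `Xᵖⁿ`
because `X ∣ u - 1`; hence `uᵏ ≡ uᵃ = xᵃ` modulo `Xᵖⁿ`. So `uᵏ` is also an `X`-adic limit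
of the partial digit products, and `X`-adic limits are unique.
-/

open PowerSeries

theorem PadicInt.intCast_modEq_appr {p : ℕ} [Fact p.Prime] (k : ℤ) (n : ℕ) :
    k ≡ ((k : ℤ_[p]).appr n : ℤ) [ZMOD (p : ℤ) ^ n] := by
  have h := PadicInt.appr_spec n (k : ℤ_[p])
  rw [Ideal.mem_span_singleton, ← Int.cast_natCast ((k : ℤ_[p]).appr n), ← Int.cast_sub,
    PadicInt.pow_p_dvd_int_iff] at h
  exact (Int.modEq_iff_dvd.mpr h).symm

theorem Units.pow_expChar_pow_dvd_val_zpow_sub_val_zpow {R : Type*} [CommRing R] {p : ℕ}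
    [ExpChar R p] {d : R} {u : Rˣ} (hu : d ∣ (u : R) - 1) {n : ℕ} {a b : ℤ}
    (hab : a ≡ b [ZMOD (p : ℤ) ^ n]) :
    d ^ p ^ n ∣ ((u ^ a : Rˣ) : R) - ((u ^ b : Rˣ) : R) := by
  have hfrob : d ^ p ^ n ∣ ((u ^ p ^ n : Rˣ) : R) - 1 := by
    rw [Units.val_pow_eq_pow_val, ← one_pow (p ^ n), ← sub_pow_expChar_pow]
    exact pow_dvd_pow_of_dvd hu _
  obtain ⟨c, hc⟩ := hab.symm.dvd
  let π := Units.map (Ideal.Quotient.mk (Ideal.span {d ^ p ^ n})).toMonoidHom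
  have hπ : π (u ^ p ^ n) = 1 :=
    Units.ext (Ideal.Quotient.eq.mpr (Ideal.mem_span_singleton.mpr (by simpa [π] using hfrob)))
  have hπab : π (u ^ a) = π (u ^ b) := by
    rw [eq_add_of_sub_eq' hc, zpow_add, zpow_mul, ← Nat.cast_pow, zpow_natCast, map_mul,
      map_zpow π (u ^ p ^ n) c, hπ, one_zpow, mul_one]
  rw [← Ideal.mem_span_singleton, ← Ideal.Quotient.eq]
  exact congrArg Units.val hπab

theorem PowerSeries.eq_of_forall_X_pow_dvd_sub {R : Type*} [CommRing R] {f g : R⟦X⟧}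
    (h : ∀ m, (X : R⟦X⟧) ^ m ∣ f - g) : f = g := by
  rw [← sub_eq_zero]
  ext j
  simpa using X_pow_dvd_iff.mp (h (j + 1)) j j.lt_succ_self

/-- **`p`-adic powers extend ordinary integer powers.**
Let `C` be a field of characteristic `p > 0` and `x ∈ 1 + X·C⟦X⟧` (a unit `u` of `C⟦X⟧`).
If `α ∈ ℤ_p` is a rational integer `k ∈ ℤ ⊆ ℤ_p`, then the `p`-adic power `x^α` — the
`X`-adic limit `y` of the partial digit products `x^(α mod pⁿ)` (with
`α.appr n = Σ_{i<n} αᵢ pⁱ` the digit partial sums of `α`) — coincides with the ordinary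
`k`-th power `u^k` in the group of units of `C⟦X⟧`. -/
theorem padic_power_of_integer_eq_zpow {C : Type*} [Field C] (p : ℕ) [Fact p.Prime]
    [CharP C p] (x : PowerSeries C) (hx : PowerSeries.constantCoeff x = 1)
    (u : (PowerSeries C)ˣ) (hu : (u : PowerSeries C) = x)
    (k : ℤ) (y : PowerSeries C)
    (hy : ∀ m : ℕ, ∃ N : ℕ, ∀ n ≥ N,
      (PowerSeries.X : PowerSeries C) ^ m ∣ (y - x ^ ((k : ℤ_[p]).appr n))) :
    y = ((u ^ k : (PowerSeries C)ˣ) : PowerSeries C) := by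
  have := expChar_of_injective_ringHom (C_injective (R := C)) p
  have hX : X ∣ (u : C⟦X⟧) - 1 := by
    rw [X_dvd_iff]
    simp [hu, hx]
  refine eq_of_forall_X_pow_dvd_sub fun m ↦ ?_
  obtain ⟨N, hN⟩ := hy m
  set n := max N m
  have hm : m ≤ p ^ n := (le_max_right N m).trans (Nat.lt_pow_self (Fact.out : p.Prime).one_lt).le
  have hk := Units.pow_expChar_pow_dvd_val_zpow_sub_val_zpow hX
    (PadicInt.intCast_modEq_appr (p := p) k n)
  rw [zpow_natCast, Units.val_pow_eq_pow_val, hu] at hk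
  simpa using dvd_sub (hN n (le_max_left N m)) ((pow_dvd_pow X hm).trans hk)
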